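/- arXiv:2405.19372 — 2 statements merged into one kernel-verified Lean document; each statement's English description precedes it below -/
import Mathlib

section
/- Let ζ > 1, r ≥ 0 and η a point of the unit circle. Set ζ₊ = (ζ+1)e^{2r} − 1. Then for every z in the non-tangential region Γ_ζ(η), the hyperbolic disc D(z,r) is contained in Γ_{ζ₊}(η); that is, every w ∈ 𝔻 with β(z,w) < r satisfies |w − η| < ζ₊(1 − |w|²). -/
/-!
Write `A = ‖1 - z̄ w‖` and `B = ‖z - w‖`, so that `A² - B² = (1 - ‖z‖²)(1 - ‖w‖²)` and
`β(z, w) < r` reads `A + B < e^{2r} (A - B)`. Since `A - B ≤ 1 - ‖w‖²`, this yields both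
`1 - ‖z‖² < e^{2r} (1 - ‖w‖²)` and `2B < (e^{2r} - 1)(1 - ‖w‖²)`; the triangle inequality
`‖w - η‖ ≤ ‖z - η‖ + B` then moves `w` into the larger region.
-/

open ComplexConjugate

noncomputable def pseudoDist (z w : ℂ) : ℝ :=
  ‖z - w‖ / ‖1 - (starRingEnd ℂ) z * w‖

/-- Hyperbolic (Poincaré) metric on the unit disc. -/
noncomputable def hypDist (z w : ℂ) : ℝ :=
  (1 / 2) * Real.log ((1 + pseudoDist z w) / (1 - pseudoDist z w))

section

variable {z w : ℂ}

theorem norm_one_sub_conj_mul_sq (z w : ℂ) :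
    ‖1 - conj z * w‖ ^ 2 = ‖z - w‖ ^ 2 + (1 - ‖z‖ ^ 2) * (1 - ‖w‖ ^ 2) := by
  simp only [Complex.sq_norm, Complex.normSq_apply, Complex.sub_re, Complex.sub_im,
    Complex.mul_re, Complex.mul_im, Complex.one_re, Complex.one_im, Complex.conj_re,
    Complex.conj_im]
  ring

theorem norm_sub_lt_norm_one_sub_conj_mul (hz : ‖z‖ < 1) (hw : ‖w‖ < 1) :
    ‖z - w‖ < ‖1 - conj z * w‖ := by
  have hzw : 0 < (1 - ‖z‖ ^ 2) * (1 - ‖w‖ ^ 2) := by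
    apply mul_pos <;> nlinarith [norm_nonneg z, norm_nonneg w]
  refine lt_of_pow_lt_pow_left₀ 2 (norm_nonneg _) ?_
  rw [norm_one_sub_conj_mul_sq]
  linarith

theorem norm_one_sub_conj_mul_sub_norm_sub_le (hw : ‖w‖ ≤ 1) :
    ‖1 - conj z * w‖ - ‖z - w‖ ≤ 1 - ‖w‖ ^ 2 := by
  rw [sub_le_iff_le_add]
  have hsplit : 1 - conj z * w = ((1 - ‖w‖ ^ 2 : ℝ) : ℂ) + conj (w - z) * w := by
    have : ((‖w‖ ^ 2 : ℝ) : ℂ) = conj w * w := by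
      rw [mul_comm, Complex.mul_conj, Complex.sq_norm]
    rw [map_sub]
    push_cast [this]
    ring
  have hw2 : 0 ≤ 1 - ‖w‖ ^ 2 := by nlinarith [norm_nonneg w]
  calc ‖1 - conj z * w‖ ≤ ‖((1 - ‖w‖ ^ 2 : ℝ) : ℂ)‖ + ‖conj (w - z) * w‖ := by
        rw [hsplit]; exact norm_add_le _ _
    _ = 1 - ‖w‖ ^ 2 + ‖z - w‖ * ‖w‖ := by
        rw [Complex.norm_real, Real.norm_of_nonneg hw2, norm_mul, RCLike.norm_conj,
          norm_sub_rev]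
    _ ≤ 1 - ‖w‖ ^ 2 + ‖z - w‖ := by
        gcongr; exact mul_le_of_le_one_right (norm_nonneg _) hw

theorem one_sub_norm_sq_le_add (hw : ‖w‖ < 1) :
    1 - ‖z‖ ^ 2 ≤ ‖1 - conj z * w‖ + ‖z - w‖ := by
  have hw2 : 0 < 1 - ‖w‖ ^ 2 := by nlinarith [norm_nonneg w]
  have hle := norm_one_sub_conj_mul_sub_norm_sub_le (z := z) hw.le
  refine le_of_mul_le_mul_right ?_ hw2
  calc (1 - ‖z‖ ^ 2) * (1 - ‖w‖ ^ 2)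
      = (‖1 - conj z * w‖ - ‖z - w‖) * (‖1 - conj z * w‖ + ‖z - w‖) := by
        linear_combination -norm_one_sub_conj_mul_sq z w
    _ ≤ (1 - ‖w‖ ^ 2) * (‖1 - conj z * w‖ + ‖z - w‖) := by gcongr
    _ = (‖1 - conj z * w‖ + ‖z - w‖) * (1 - ‖w‖ ^ 2) := mul_comm _ _

theorem pseudoDist_lt_one (hz : ‖z‖ < 1) (hw : ‖w‖ < 1) : pseudoDist z w < 1 :=
  have hlt := norm_sub_lt_norm_one_sub_conj_mul hz hw
  (div_lt_one ((norm_nonneg _).trans_lt hlt)).mpr hlt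

theorem one_add_pseudoDist_lt_of_hypDist_lt {r : ℝ} (hz : ‖z‖ < 1) (hw : ‖w‖ < 1)
    (h : hypDist z w < r) : 1 + pseudoDist z w < Real.exp (2 * r) * (1 - pseudoDist z w) := by
  have hρ0 : 0 ≤ pseudoDist z w := div_nonneg (norm_nonneg _) (norm_nonneg _)
  have hρ1 : 0 < 1 - pseudoDist z w := sub_pos.mpr (pseudoDist_lt_one hz hw)
  have hlog : Real.log ((1 + pseudoDist z w) / (1 - pseudoDist z w)) < 2 * r := by
    rw [hypDist] at h; linarith
  rwa [Real.log_lt_iff_lt_exp (by positivity), div_lt_iff₀ hρ1] at hlog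

theorem add_lt_exp_mul_sub_of_hypDist_lt {r : ℝ} (hz : ‖z‖ < 1) (hw : ‖w‖ < 1)
    (h : hypDist z w < r) :
    ‖1 - conj z * w‖ + ‖z - w‖ < Real.exp (2 * r) * (‖1 - conj z * w‖ - ‖z - w‖) := by
  have hA : 0 < ‖1 - conj z * w‖ :=
    (norm_nonneg _).trans_lt (norm_sub_lt_norm_one_sub_conj_mul hz hw)
  have hρ := one_add_pseudoDist_lt_of_hypDist_lt hz hw h
  rwa [pseudoDist, one_add_div hA.ne', one_sub_div hA.ne', mul_div_assoc',
    div_lt_div_iff_of_pos_right hA] at hρ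

theorem one_sub_norm_sq_lt_exp_mul_of_hypDist_lt {r : ℝ} (hz : ‖z‖ < 1) (hw : ‖w‖ < 1)
    (h : hypDist z w < r) : 1 - ‖z‖ ^ 2 < Real.exp (2 * r) * (1 - ‖w‖ ^ 2) :=
  calc 1 - ‖z‖ ^ 2 ≤ ‖1 - conj z * w‖ + ‖z - w‖ := one_sub_norm_sq_le_add hw
    _ < Real.exp (2 * r) * (‖1 - conj z * w‖ - ‖z - w‖) :=
        add_lt_exp_mul_sub_of_hypDist_lt hz hw h
    _ ≤ Real.exp (2 * r) * (1 - ‖w‖ ^ 2) := by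
        gcongr ?_ * ?_; exact norm_one_sub_conj_mul_sub_norm_sub_le hw.le

theorem two_mul_norm_sub_lt_of_hypDist_lt {r : ℝ} (hz : ‖z‖ < 1) (hw : ‖w‖ < 1)
    (h : hypDist z w < r) : 2 * ‖z - w‖ < (Real.exp (2 * r) - 1) * (1 - ‖w‖ ^ 2) := by
  have hsum := add_lt_exp_mul_sub_of_hypDist_lt hz hw h
  have hgap := sub_pos.mpr (norm_sub_lt_norm_one_sub_conj_mul hz hw)
  have hle := norm_one_sub_conj_mul_sub_norm_sub_le (z := z) hw.le
  have hE : 0 ≤ Real.exp (2 * r) - 1 := by nlinarith [norm_nonneg (z - w)]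
  calc 2 * ‖z - w‖ < (Real.exp (2 * r) - 1) * (‖1 - conj z * w‖ - ‖z - w‖) := by linarith
    _ ≤ (Real.exp (2 * r) - 1) * (1 - ‖w‖ ^ 2) := by gcongr

end

theorem stmt1_general (ζ r : ℝ) (η : ℂ)
    (ζp : ℝ) (hζp : ζp = (ζ + 1) * Real.exp (2 * r) - 1) :
    ∀ z : ℂ, ‖z‖ < 1 → ‖z - η‖ < ζ * (1 - ‖z‖ ^ 2) →
      ∀ w : ℂ, ‖w‖ < 1 → hypDist z w < r → ‖w - η‖ < ζp * (1 - ‖w‖ ^ 2) := by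
  intro z hz hzη w hw hd
  have hz2 : 0 < 1 - ‖z‖ ^ 2 := by nlinarith [norm_nonneg z]
  have hζ : 0 < ζ := pos_of_mul_pos_left ((norm_nonneg _).trans_lt hzη) hz2.le
  have hshrink := one_sub_norm_sq_lt_exp_mul_of_hypDist_lt hz hw hd
  have hmove := two_mul_norm_sub_lt_of_hypDist_lt hz hw hd
  calc ‖w - η‖ ≤ ‖z - η‖ + ‖z - w‖ := by
        linarith [norm_sub_le_norm_sub_add_norm_sub w z η, norm_sub_rev w z]
    _ < ζ * (Real.exp (2 * r) * (1 - ‖w‖ ^ 2)) + (Real.exp (2 * r) - 1) * (1 - ‖w‖ ^ 2) := by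
        linarith [norm_nonneg (z - w), mul_lt_mul_of_pos_left hshrink hζ]
    _ = ζp * (1 - ‖w‖ ^ 2) := by rw [hζp]; ring

theorem stmt1 (ζ r : ℝ) (hζ : 1 < ζ) (hr : 0 ≤ r) (η : ℂ) (hη : ‖η‖ = 1)
    (ζp : ℝ) (hζp : ζp = (ζ + 1) * Real.exp (2 * r) - 1) :
    ∀ z : ℂ, ‖z‖ < 1 → ‖z - η‖ < ζ * (1 - ‖z‖ ^ 2) →
      ∀ w : ℂ, ‖w‖ < 1 → hypDist z w < r → ‖w - η‖ < ζp * (1 - ‖w‖ ^ 2) :=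
  stmt1_general ζ r η ζp hζp
end

section
/- Let 1 ≤ p < ∞, 1 < q < ∞, and let Z = {a_j} be an (r,κ)-lattice in 𝔻. For sequences {c_j} ∈ T_p^q(Z) and {d_j} ∈ T_{p'}^{q'}(Z) (where p', q' are conjugate exponents), the pairing ⟨{c_j},{d_j}⟩ = Σ_j c_j d_j (1−|a_j|²) converges absolutely and satisfies |⟨{c_j},{d_j}⟩| ≤ C ‖{c_j}‖_{T_p^q(Z)} ‖{d_j}‖_{T_{p'}^{q'}(Z)} for a constant C independent of the sequences. -/
/-!
A lattice point `a` lies in the cone `Γ(e^{iθ})` for all `θ` in an arc of length at least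
`min (ζ - 1) π * (1 - |a|²)` around `arg a`, so the weight `1 - |a|²` is at most a constant
times the measure of that arc. The pairing is therefore dominated by
`∫ Σ_{a_j ∈ Γ(e^{iθ})} |c_j| |d_j| dθ`, and Hölder's inequality, first in `ℓ^p` over the cone
and then in `L^q` over the circle, bounds this by the product of the tent space norms.
-/

open MeasureTheory ENNReal

/-- Hyperbolic disc of radius `s` centered at `z`. -/
def hypDisc (z : ℂ) (s : ℝ) : Set ℂ := {w : ℂ | ‖w‖ < 1 ∧ hypDist z w < s}

/-- An `(r,κ)`-lattice: points of the unit disc whose hyperbolic `r`-discs cover the disc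
and whose hyperbolic `κ`-discs are pairwise disjoint. -/
def IsLattice (a : ℕ → ℂ) (r κ : ℝ) : Prop :=
  (∀ j, ‖a j‖ < 1) ∧ (∀ z : ℂ, ‖z‖ < 1 → ∃ j, hypDist (a j) z < r) ∧
    Pairwise fun i j => Disjoint (hypDisc (a i) κ) (hypDisc (a j) κ)

/-- Non-tangential approach region `Γ_ζ(η)`. -/
def ntRegion (ζ : ℝ) (η : ℂ) : Set ℂ := {z : ℂ | ‖z‖ < 1 ∧ ‖z - η‖ < ζ * (1 - ‖z‖ ^ 2)}

/-- Point `e^{iθ}` of the unit circle. -/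
noncomputable def circlePt (θ : ℝ) : ℂ := Complex.exp (θ * Complex.I)

/-- Carleson box `S(u)`. -/
noncomputable def carlesonBox (u : ℂ) : Set ℂ :=
  if u = 0 then Metric.ball 0 1 else
    {w : ℂ | ‖u‖ ≤ ‖w‖ ∧ ‖w‖ < 1 ∧ |Complex.arg (w * (starRingEnd ℂ) u)| ≤ (1 - ‖u‖) / 2}

/-- `ℓ^p`-type sum of a sequence of extended nonnegative reals, with `p = ∞` giving the sup. -/
noncomputable def lpSum (p : ℝ≥0∞) (s : ℕ → ℝ≥0∞) : ℝ≥0∞ :=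
  if p = ∞ then ⨆ j, s j else (∑' j, s j ^ p.toReal) ^ (1 / p.toReal)

/-- Norm of the sequence tent space `T_p^q(Z)` with aperture `ζ` and lattice `a`,
allowing `p = ∞` (sup version) and `q = ∞` (Carleson version). -/
noncomputable def tentSeqNorm (ζ : ℝ) (a : ℕ → ℂ) (p q : ℝ≥0∞) (x : ℕ → ℂ) : ℝ≥0∞ :=
  if q = ∞ then
    (if p = ∞ then
      essSup (fun θ : ℝ => ⨆ j, Set.indicator (ntRegion ζ (circlePt θ))
          (fun _ => (‖x j‖₊ : ℝ≥0∞)) (a j))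
        (volume.restrict (Set.Ioc (0 : ℝ) (2 * Real.pi)))
    else
      essSup (fun θ : ℝ => ⨆ u ∈ ntRegion ζ (circlePt θ),
          ((1 - (‖u‖₊ : ℝ≥0∞) ^ 2)⁻¹ *
            ∑' j, Set.indicator (carlesonBox u)
              (fun _ => (‖x j‖₊ : ℝ≥0∞) ^ p.toReal * (1 - (‖a j‖₊ : ℝ≥0∞) ^ 2)) (a j)) ^
            (1 / p.toReal))
        (volume.restrict (Set.Ioc (0 : ℝ) (2 * Real.pi))))
  else
    (∫⁻ θ in Set.Ioc (0 : ℝ) (2 * Real.pi),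
        (lpSum p fun j => Set.indicator (ntRegion ζ (circlePt θ))
          (fun _ => (‖x j‖₊ : ℝ≥0∞)) (a j)) ^ q.toReal) ^ (1 / q.toReal)

/-- Hardy space (quasi)norm `‖f‖_{H^p}` as an extended nonnegative real. -/
noncomputable def hardyNorm (p : ℝ) (f : ℂ → ℂ) : ℝ≥0∞ :=
  (⨆ r ∈ Set.Ico (0 : ℝ) 1,
      (∫⁻ θ in Set.Ioc (0 : ℝ) (2 * Real.pi),
        (‖f (r * circlePt θ)‖₊ : ℝ≥0∞) ^ p) / ENNReal.ofReal (2 * Real.pi)) ^ (1 / p)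

open Set Real

lemma lpSum_one (f : ℕ → ℝ≥0∞) : lpSum 1 f = ∑' j, f j := by
  simp [lpSum]

lemma lpSum_top (f : ℕ → ℝ≥0∞) : lpSum ∞ f = ⨆ j, f j := by
  simp [lpSum]

lemma lpSum_eq_lintegral_count {p : ℝ≥0∞} (hp : p ≠ ∞) (f : ℕ → ℝ≥0∞) :
    lpSum p f = (∫⁻ j, f j ^ p.toReal ∂Measure.count) ^ (1 / p.toReal) := by
  rw [lpSum, if_neg hp, lintegral_count]

lemma tsum_mul_le_lpSum_one_mul_lpSum_top (f g : ℕ → ℝ≥0∞) :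
    ∑' j, f j * g j ≤ lpSum 1 f * lpSum ∞ g := by
  rw [lpSum_one, lpSum_top, ← ENNReal.tsum_mul_right]
  exact ENNReal.tsum_le_tsum fun j => by gcongr; exact le_iSup g j

theorem tsum_mul_le_lpSum_mul_lpSum {p p' : ℝ≥0∞} [HolderConjugate p p']
    (f g : ℕ → ℝ≥0∞) : ∑' j, f j * g j ≤ lpSum p f * lpSum p' g := by
  by_cases hp : p = ∞
  · obtain rfl := (HolderConjugate.eq_top_iff_eq_one p p').1 hp
    subst hp
    simpa only [mul_comm] using tsum_mul_le_lpSum_one_mul_lpSum_top g f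
  by_cases hp' : p' = ∞
  · obtain rfl := (HolderConjugate.eq_top_iff_eq_one p' p).1 hp'
    subst hp'
    exact tsum_mul_le_lpSum_one_mul_lpSum_top f g
  rw [lpSum_eq_lintegral_count hp, lpSum_eq_lintegral_count hp', ← lintegral_count]
  exact ENNReal.lintegral_mul_le_Lp_mul_Lq _ (HolderConjugate.toReal_of_ne_top hp hp')
    measurable_from_nat.aemeasurable measurable_from_nat.aemeasurable

def ntShadow (ζ : ℝ) (w : ℂ) : Set ℝ := {θ | w ∈ ntRegion ζ (circlePt θ)}

lemma indicator_ntRegion_circlePt (ζ θ : ℝ) (w : ℂ) (v : ℝ≥0∞) :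
    (ntRegion ζ (circlePt θ)).indicator (fun _ => v) w = (ntShadow ζ w).indicator (fun _ => v) θ :=
  rfl

lemma continuous_circlePt : Continuous circlePt := by
  unfold circlePt; fun_prop

lemma measurableSet_ntShadow (ζ : ℝ) (w : ℂ) : MeasurableSet (ntShadow ζ w) :=
  (MeasurableSet.const (‖w‖ < 1)).inter <| measurableSet_lt
    (continuous_const.sub continuous_circlePt).norm.measurable measurable_const

lemma circlePt_periodic : Function.Periodic circlePt (2 * π) := fun θ => by
  simpa [circlePt] using Complex.exp_mul_I_periodic θ

lemma norm_circlePt_sub_circlePt_le (θ φ : ℝ) : ‖circlePt θ - circlePt φ‖ ≤ |θ - φ| := by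
  have h : circlePt θ - circlePt φ = circlePt φ * (Complex.exp (Complex.I * ↑(θ - φ)) - 1) := by
    simp only [circlePt, mul_sub, mul_one, ← Complex.exp_add]
    congr 2; push_cast; ring
  rw [h, norm_mul, circlePt, Complex.norm_exp_ofReal_mul_I, one_mul, ← Real.norm_eq_abs]
  exact Real.norm_exp_I_mul_ofReal_sub_one_le

lemma norm_sub_circlePt_arg {z : ℂ} (hz : ‖z‖ ≤ 1) :
    ‖z - circlePt (Complex.arg z)‖ = 1 - ‖z‖ := by
  have h : z - circlePt (Complex.arg z) = ((‖z‖ - 1 : ℝ) : ℂ) * circlePt (Complex.arg z) := by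
    rw [circlePt, Complex.ofReal_sub, sub_mul, Complex.norm_mul_exp_arg_mul_I, Complex.ofReal_one,
      one_mul]
  rw [h, norm_mul, circlePt, Complex.norm_exp_ofReal_mul_I, mul_one, Complex.norm_real,
    Real.norm_eq_abs, abs_of_nonpos (by linarith)]
  ring

lemma exists_mem_Ioc_norm_sub_circlePt_le {z : ℂ} (hz : ‖z‖ ≤ 1) :
    ∃ θ ∈ Ioc 0 (2 * π), ‖z - circlePt θ‖ ≤ 1 - ‖z‖ := by
  refine ⟨toIocMod two_pi_pos 0 (Complex.arg z), by simpa using toIocMod_mem_Ioc two_pi_pos 0 _,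
    le_of_eq ?_⟩
  rw [toIocMod, circlePt_periodic.sub_zsmul_eq, norm_sub_circlePt_arg hz]

lemma ball_subset_ntShadow {ζ δ θ₀ : ℝ} {z : ℂ} (hz : ‖z‖ < 1)
    (hθ₀ : ‖z - circlePt θ₀‖ ≤ 1 - ‖z‖) (hδ : δ ≤ (ζ - 1) * (1 - ‖z‖ ^ 2)) :
    Metric.ball θ₀ δ ⊆ ntShadow ζ z := by
  intro θ hθ
  rw [Metric.mem_ball, Real.dist_eq, abs_sub_comm] at hθ
  have hsq : ‖z‖ ^ 2 ≤ ‖z‖ := by nlinarith [norm_nonneg z]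
  refine ⟨hz, ?_⟩
  calc ‖z - circlePt θ‖ ≤ ‖z - circlePt θ₀‖ + ‖circlePt θ₀ - circlePt θ‖ :=
        norm_sub_le_norm_sub_add_norm_sub _ _ _
    _ ≤ (1 - ‖z‖) + |θ₀ - θ| := add_le_add hθ₀ (norm_circlePt_sub_circlePt_le θ₀ θ)
    _ < ζ * (1 - ‖z‖ ^ 2) := by linarith

lemma ofReal_le_volume_Ioc_inter_ball {a b x δ : ℝ} (hx : x ∈ Icc a b) (hδ : δ ≤ b - a) :
    ENNReal.ofReal δ ≤ volume (Ioc a b ∩ Metric.ball x δ) := by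
  obtain ⟨hax, hxb⟩ := hx
  calc ENNReal.ofReal δ ≤ ENNReal.ofReal (min b (x + δ) - max a (x - δ)) := by
        rw [ENNReal.ofReal_le_ofReal_iff']
        rcases le_or_gt δ 0 with h | h
        · exact Or.inr h
        · left
          simp only [min_def, max_def]
          split_ifs <;> linarith
    _ = volume (Ioo (max a (x - δ)) (min b (x + δ))) := Real.volume_Ioo.symm
    _ ≤ volume (Ioc a b ∩ Metric.ball x δ) := by
        refine measure_mono fun y ⟨hy₁, hy₂⟩ => ?_
        simp only [max_lt_iff, lt_min_iff] at hy₁ hy₂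
        refine ⟨⟨hy₁.1, hy₂.1.le⟩, ?_⟩
        rw [Metric.mem_ball, Real.dist_eq, abs_lt]
        constructor <;> linarith

lemma ofReal_mul_one_sub_sq_le_volume_ntShadow {ζ : ℝ} {z : ℂ} (hz : ‖z‖ < 1) :
    ENNReal.ofReal (min (ζ - 1) π * (1 - ‖z‖ ^ 2)) ≤
      volume.restrict (Ioc 0 (2 * π)) (ntShadow ζ z) := by
  obtain ⟨θ₀, hθ₀, hθ₀z⟩ := exists_mem_Ioc_norm_sub_circlePt_le hz.le
  have ht : 0 < 1 - ‖z‖ ^ 2 := by nlinarith [norm_nonneg z]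
  rw [Measure.restrict_apply' measurableSet_Ioc, inter_comm]
  calc ENNReal.ofReal (min (ζ - 1) π * (1 - ‖z‖ ^ 2))
      ≤ volume (Ioc 0 (2 * π) ∩ Metric.ball θ₀ (min (ζ - 1) π * (1 - ‖z‖ ^ 2))) := by
        refine ofReal_le_volume_Ioc_inter_ball (Ioc_subset_Icc_self hθ₀) ?_
        nlinarith [min_le_right (ζ - 1) π, pi_pos, sq_nonneg ‖z‖]
    _ ≤ volume (Ioc 0 (2 * π) ∩ ntShadow ζ z) := by
        refine measure_mono (inter_subset_inter_right _ (ball_subset_ntShadow hz hθ₀z ?_))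
        exact mul_le_mul_of_nonneg_right (min_le_left _ _) ht.le

noncomputable def coneLpSum (ζ : ℝ) (a : ℕ → ℂ) (p : ℝ≥0∞) (x : ℕ → ℂ) (θ : ℝ) : ℝ≥0∞ :=
  lpSum p fun j => (ntRegion ζ (circlePt θ)).indicator (fun _ => ‖x j‖ₑ) (a j)

lemma tentSeqNorm_of_ne_top {q : ℝ≥0∞} (hq : q ≠ ∞) (ζ : ℝ) (a : ℕ → ℂ) (p : ℝ≥0∞)
    (x : ℕ → ℂ) : tentSeqNorm ζ a p q x =
      (∫⁻ θ in Ioc 0 (2 * π), coneLpSum ζ a p x θ ^ q.toReal) ^ (1 / q.toReal) := by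
  rw [tentSeqNorm, if_neg hq]
  rfl

lemma measurable_indicator_ntRegion (ζ : ℝ) (w : ℂ) (v : ℝ≥0∞) :
    Measurable fun θ => (ntRegion ζ (circlePt θ)).indicator (fun _ => v) w := by
  simp only [indicator_ntRegion_circlePt]
  exact measurable_const.indicator (measurableSet_ntShadow ζ w)

lemma measurable_coneLpSum (ζ : ℝ) (a : ℕ → ℂ) (p : ℝ≥0∞) (x : ℕ → ℂ) :
    Measurable (coneLpSum ζ a p x) := by
  have h j := measurable_indicator_ntRegion ζ (a j) ‖x j‖ₑ
  unfold coneLpSum lpSum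
  split_ifs
  · exact .iSup h
  · exact (Measurable.tsum fun j => (h j).pow_const _).pow_const _

lemma lintegral_indicator_ntRegion_mul (μ : Measure ℝ) (ζ : ℝ) (w : ℂ) (u v : ℝ≥0∞) :
    ∫⁻ θ, (ntRegion ζ (circlePt θ)).indicator (fun _ => u) w *
        (ntRegion ζ (circlePt θ)).indicator (fun _ => v) w ∂μ = u * v * μ (ntShadow ζ w) := by
  simp only [indicator_ntRegion_circlePt, ← indicator_mul]
  exact lintegral_indicator_const (measurableSet_ntShadow ζ w) (u * v)

lemma norm_one_sub_norm_sq {z : ℂ} (hz : ‖z‖ ≤ 1) :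
    ‖(1 : ℂ) - (‖z‖ : ℂ) ^ 2‖ = 1 - ‖z‖ ^ 2 := by
  rw [← Complex.ofReal_one, ← Complex.ofReal_pow, ← Complex.ofReal_sub, Complex.norm_real,
    Real.norm_of_nonneg (by nlinarith [norm_nonneg z])]

lemma enorm_one_sub_norm_sq {z : ℂ} (hz : ‖z‖ ≤ 1) :
    ‖(1 : ℂ) - (‖z‖ : ℂ) ^ 2‖ₑ = ENNReal.ofReal (1 - ‖z‖ ^ 2) := by
  rw [← ofReal_norm, norm_one_sub_norm_sq hz]

theorem tsum_enorm_mul_one_sub_sq_le {ζ : ℝ} (hζ : 1 < ζ) {a : ℕ → ℂ} (ha : ∀ j, ‖a j‖ < 1)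
    {p p' q q' : ℝ≥0∞} [HolderConjugate p p'] [HolderConjugate q q'] (hq : q ≠ ∞) (hq' : q' ≠ ∞)
    (c d : ℕ → ℂ) :
    ∑' j, ‖c j * d j * ((1 : ℂ) - (‖a j‖ : ℂ) ^ 2)‖ₑ ≤
      ENNReal.ofReal (min (ζ - 1) π)⁻¹ * tentSeqNorm ζ a p q c * tentSeqNorm ζ a p' q' d := by
  set μ := volume.restrict (Ioc 0 (2 * π))
  set C := ENNReal.ofReal (min (ζ - 1) π)⁻¹
  set I : (ℕ → ℂ) → ℕ → ℝ → ℝ≥0∞ := fun x j θ =>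
    (ntRegion ζ (circlePt θ)).indicator (fun _ => ‖x j‖ₑ) (a j)
  have hI x j : Measurable (I x j) := measurable_indicator_ntRegion ζ (a j) _
  have hm : 0 < min (ζ - 1) π := lt_min (by linarith) pi_pos
  have hweight : ∀ j, ENNReal.ofReal (1 - ‖a j‖ ^ 2) ≤ C * μ (ntShadow ζ (a j)) := fun j => by
    calc ENNReal.ofReal (1 - ‖a j‖ ^ 2)
        = C * ENNReal.ofReal (min (ζ - 1) π * (1 - ‖a j‖ ^ 2)) := by
          rw [← ENNReal.ofReal_mul (inv_nonneg.2 hm.le), inv_mul_cancel_left₀ hm.ne']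
      _ ≤ C * μ (ntShadow ζ (a j)) := by
          gcongr
          exact ofReal_mul_one_sub_sq_le_volume_ntShadow (ha j)
  have hterm : ∀ j, ‖c j * d j * ((1 : ℂ) - (‖a j‖ : ℂ) ^ 2)‖ₑ ≤ C * ∫⁻ θ, I c j θ * I d j θ ∂μ :=
    fun j => by
      rw [lintegral_indicator_ntRegion_mul, enorm_mul, enorm_mul,
        enorm_one_sub_norm_sq (ha j).le, mul_left_comm]
      gcongr
      exact hweight j
  calc ∑' j, ‖c j * d j * ((1 : ℂ) - (‖a j‖ : ℂ) ^ 2)‖ₑ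
      ≤ ∑' j, C * ∫⁻ θ, I c j θ * I d j θ ∂μ := ENNReal.tsum_le_tsum hterm
    _ = C * ∫⁻ θ, ∑' j, I c j θ * I d j θ ∂μ := by
        rw [ENNReal.tsum_mul_left, lintegral_tsum (f := fun j θ => I c j θ * I d j θ)
          fun j => ((hI c j).mul (hI d j)).aemeasurable]
    _ ≤ C * ∫⁻ θ, coneLpSum ζ a p c θ * coneLpSum ζ a p' d θ ∂μ := by
        gcongr with θ
        exact tsum_mul_le_lpSum_mul_lpSum _ _
    _ ≤ C * (tentSeqNorm ζ a p q c * tentSeqNorm ζ a p' q' d) := by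
        rw [tentSeqNorm_of_ne_top hq, tentSeqNorm_of_ne_top hq']
        gcongr
        exact ENNReal.lintegral_mul_le_Lp_mul_Lq μ (HolderConjugate.toReal_of_ne_top hq hq')
          (measurable_coneLpSum ζ a p c).aemeasurable (measurable_coneLpSum ζ a p' d).aemeasurable
    _ = _ := (mul_assoc _ _ _).symm

theorem stmt4_general (p q p' q' : ℝ≥0∞) (hq : 1 < q) (hq' : q ≠ ∞)
    (hpc : 1 / p + 1 / p' = 1) (hqc : 1 / q + 1 / q' = 1)
    (ζ r κ : ℝ) (hζ : 1 < ζ)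
    (a : ℕ → ℂ) (ha : IsLattice a r κ) :
    ∃ C : ℝ≥0∞, C ≠ ∞ ∧ ∀ c d : ℕ → ℂ,
      tentSeqNorm ζ a p q c ≠ ∞ → tentSeqNorm ζ a p' q' d ≠ ∞ →
      Summable (fun j => ‖c j‖ * ‖d j‖ * (1 - ‖a j‖ ^ 2)) ∧
      (‖∑' j, c j * d j * ((1 : ℂ) - (‖a j‖ : ℂ) ^ 2)‖₊ : ℝ≥0∞) ≤
        C * tentSeqNorm ζ a p q c * tentSeqNorm ζ a p' q' d := by
  have : HolderConjugate p p' := holderConjugate_iff.2 (by simpa only [one_div] using hpc)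
  have : HolderConjugate q q' := holderConjugate_iff.2 (by simpa only [one_div] using hqc)
  have hq't : q' ≠ ∞ := (HolderConjugate.ne_top_iff_ne_one q' q).2 hq.ne'
  refine ⟨ENNReal.ofReal (min (ζ - 1) π)⁻¹, ofReal_ne_top, fun c d hc hd => ?_⟩
  have hbound := tsum_enorm_mul_one_sub_sq_le (p := p) (p' := p') hζ ha.1 hq' hq't c d
  have hfin : ∑' j, ‖c j * d j * ((1 : ℂ) - (‖a j‖ : ℂ) ^ 2)‖ₑ ≠ ∞ :=
    ne_top_of_le_ne_top (mul_ne_top (mul_ne_top ofReal_ne_top hc) hd) hbound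
  refine ⟨(tsum_enorm_ne_top_iff_summable_norm.1 hfin).congr fun j => ?_,
    enorm_tsum_le_tsum_enorm.trans hbound⟩
  rw [norm_mul, norm_mul, norm_one_sub_norm_sq (ha.1 j).le]

theorem stmt4 (p q p' q' : ℝ≥0∞) (hp : 1 ≤ p) (hp' : p ≠ ∞) (hq : 1 < q) (hq' : q ≠ ∞)
    (hpc : 1 / p + 1 / p' = 1) (hqc : 1 / q + 1 / q' = 1)
    (ζ r κ : ℝ) (hζ : 1 < ζ) (hκ : 0 < κ) (hκr : κ < r)
    (a : ℕ → ℂ) (ha : IsLattice a r κ) :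
    ∃ C : ℝ≥0∞, C ≠ ∞ ∧ ∀ c d : ℕ → ℂ,
      tentSeqNorm ζ a p q c ≠ ∞ → tentSeqNorm ζ a p' q' d ≠ ∞ →
      Summable (fun j => ‖c j‖ * ‖d j‖ * (1 - ‖a j‖ ^ 2)) ∧
      (‖∑' j, c j * d j * ((1 : ℂ) - (‖a j‖ : ℂ) ^ 2)‖₊ : ℝ≥0∞) ≤
        C * tentSeqNorm ζ a p q c * tentSeqNorm ζ a p' q' d :=
  stmt4_general p q p' q' hq hq' hpc hqc ζ r κ hζ a ha
end
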